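/- For δ > 0, the function q(x) = δ x^{δ−1}(1+x)^{−1−δ} for x > 0 is a probability density (i.e., ∫_0^∞ q(x) dx = 1), and it satisfies the stationarity equation q(x) = (x^{δ−1}/B(δ+1,δ)) ∫_0^∞ (1+y)^{δ+1} (1+x+y)^{−1−2δ} q(y) dy for all x > 0. -/

import Mathlib

/-! Since `(1 + y)^(δ+1) q y = δ y^(δ-1)`, the stationarity integral is the Beta integral
`∫₀^∞ y^(a-1) (c + y)^(-(a+b)) dy = c^(-b) B(a, b)` with `c = 1 + x`, `a = δ`, `b = δ + 1`; the
substitutions `y = c t` and `t = u / (1 - u)` reduce it to Euler's integral over `(0, 1)`.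
The total mass of `q` is the case `c = 1`, `b = 1`, where `δ B(δ, 1) = 1`. -/

open MeasureTheory

/-- The Beta function `B(a, b) = Γ(a)Γ(b)/Γ(a+b)` for positive real arguments. -/
noncomputable def betaFun (a b : ℝ) : ℝ := Real.Gamma a * Real.Gamma b / Real.Gamma (a + b)

open Set

lemma betaFun_eq_beta (a b : ℝ) : betaFun a b = ProbabilityTheory.beta a b := rfl

lemma betaFun_pos {a b : ℝ} (ha : 0 < a) (hb : 0 < b) : 0 < betaFun a b :=
  ProbabilityTheory.beta_pos ha hb

lemma betaFun_comm (a b : ℝ) : betaFun a b = betaFun b a := by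
  rw [betaFun, betaFun, mul_comm, add_comm]

lemma betaFun_one_right {a : ℝ} (ha : 0 < a) : betaFun a 1 = a⁻¹ := by
  rw [betaFun, Real.Gamma_one, Real.Gamma_add_one ha.ne']
  field_simp [(Real.Gamma_pos_of_pos ha).ne']

lemma integral_Ioo_rpow_mul_one_sub_rpow {a b : ℝ} (ha : 0 < a) (hb : 0 < b) :
    ∫ x in Ioo (0 : ℝ) 1, x ^ (a - 1) * (1 - x) ^ (b - 1) = betaFun a b := by
  have hreal : Complex.betaIntegral a b
      = ((∫ x in Ioo (0 : ℝ) 1, x ^ (a - 1) * (1 - x) ^ (b - 1) : ℝ) : ℂ) := by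
    rw [Complex.betaIntegral, intervalIntegral.integral_of_le zero_le_one,
      integral_Ioc_eq_integral_Ioo]
    refine Eq.trans ?_ integral_ofReal
    refine setIntegral_congr_fun measurableSet_Ioo fun x hx => ?_
    change _ = ((x ^ (a - 1) * (1 - x) ^ (b - 1) : ℝ) : ℂ)
    rw [Complex.ofReal_mul, Complex.ofReal_cpow hx.1.le,
      Complex.ofReal_cpow (sub_nonneg.2 hx.2.le)]
    push_cast
    rfl
  rw [betaFun_eq_beta, ProbabilityTheory.beta_eq_betaIntegralReal a b ha hb, hreal,
    Complex.ofReal_re]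

lemma image_div_one_sub_Ioo : (fun u : ℝ => u / (1 - u)) '' Ioo 0 1 = Ioi 0 := by
  ext x
  constructor
  · rintro ⟨u, ⟨hu0, hu1⟩, rfl⟩
    exact div_pos hu0 (sub_pos.2 hu1)
  · intro (hx : 0 < x)
    refine ⟨x / (1 + x), ⟨by positivity, (div_lt_one (by positivity)).2 (by linarith)⟩, ?_⟩
    field_simp
    ring

lemma integral_Ioi_eq_integral_Ioo_div_one_sub {E : Type*} [NormedAddCommGroup E]
    [NormedSpace ℝ E] (f : ℝ → E) :
    ∫ x in Ioi (0 : ℝ), f x = ∫ u in Ioo (0 : ℝ) 1, ((1 - u) ^ 2)⁻¹ • f (u / (1 - u)) := by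
  have hderiv : ∀ u ∈ Ioo (0 : ℝ) 1,
      HasDerivWithinAt (fun u : ℝ => u / (1 - u)) ((1 - u) ^ 2)⁻¹ (Ioo 0 1) u := by
    intro u ⟨_, hu1⟩
    have hne : 1 - u ≠ 0 := (sub_pos.2 hu1).ne'
    refine (((hasDerivAt_id u).div ((hasDerivAt_const u 1).sub (hasDerivAt_id u)) hne)
      |>.congr_deriv ?_).hasDerivWithinAt
    simp only [Pi.sub_apply, id]
    field_simp
    ring
  have hinj : InjOn (fun u : ℝ => u / (1 - u)) (Ioo 0 1) := by
    intro u ⟨_, hu1⟩ v ⟨_, hv1⟩ huv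
    have := (sub_pos.2 hu1).ne'
    have := (sub_pos.2 hv1).ne'
    field_simp at huv
    linarith
  rw [← image_div_one_sub_Ioo, integral_image_eq_integral_abs_deriv_smul measurableSet_Ioo
    hderiv hinj]
  refine setIntegral_congr_fun measurableSet_Ioo fun u _ => ?_
  rw [abs_of_nonneg (by positivity)]

lemma integral_Ioi_rpow_mul_one_add_rpow {a b : ℝ} (ha : 0 < a) (hb : 0 < b) :
    ∫ x in Ioi (0 : ℝ), x ^ (a - 1) * (1 + x) ^ (-(a + b)) = betaFun a b := by
  rw [integral_Ioi_eq_integral_Ioo_div_one_sub, ← integral_Ioo_rpow_mul_one_sub_rpow ha hb]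
  refine setIntegral_congr_fun measurableSet_Ioo fun u ⟨hu0, hu1⟩ => ?_
  have h1u : 0 < 1 - u := sub_pos.2 hu1
  have hsum : 1 + u / (1 - u) = (1 - u)⁻¹ := by field_simp; ring
  rw [smul_eq_mul, hsum, Real.div_rpow hu0.le h1u.le, Real.inv_rpow h1u.le,
    ← Real.rpow_neg h1u.le, neg_neg, ← Real.rpow_natCast, ← Real.rpow_neg h1u.le, div_eq_mul_inv,
    ← Real.rpow_neg h1u.le]
  calc (1 - u) ^ (-((2 : ℕ) : ℝ)) * (u ^ (a - 1) * (1 - u) ^ (-(a - 1)) * (1 - u) ^ (a + b))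
      = u ^ (a - 1) * ((1 - u) ^ (-((2 : ℕ) : ℝ)) * (1 - u) ^ (-(a - 1)) * (1 - u) ^ (a + b)) := by
        ring
    _ = u ^ (a - 1) * (1 - u) ^ (b - 1) := by
        rw [← Real.rpow_add h1u, ← Real.rpow_add h1u]
        congr 2
        push_cast
        ring

lemma integral_Ioi_rpow_mul_add_rpow {a b c : ℝ} (ha : 0 < a) (hb : 0 < b) (hc : 0 < c) :
    ∫ y in Ioi (0 : ℝ), y ^ (a - 1) * (c + y) ^ (-(a + b)) = c ^ (-b) * betaFun a b := by
  have hscale := integral_comp_mul_left_Ioi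
    (fun y : ℝ => y ^ (a - 1) * (c + y) ^ (-(a + b))) 0 hc
  rw [mul_zero, smul_eq_mul] at hscale
  have hfactor : ∀ t ∈ Ioi (0 : ℝ), (c * t) ^ (a - 1) * (c + c * t) ^ (-(a + b))
      = c ^ (-b - 1) * (t ^ (a - 1) * (1 + t) ^ (-(a + b))) := by
    intro t (ht : 0 < t)
    rw [show c + c * t = c * (1 + t) by ring, Real.mul_rpow hc.le ht.le,
      Real.mul_rpow hc.le (by positivity), show -b - 1 = (a - 1) + -(a + b) by ring,
      Real.rpow_add hc]
    ring
  rw [setIntegral_congr_fun measurableSet_Ioi hfactor, integral_const_mul,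
    integral_Ioi_rpow_mul_one_add_rpow ha hb] at hscale
  rw [← mul_inv_cancel_left₀ hc.ne' (∫ y in Ioi (0 : ℝ), _), ← hscale, ← mul_assoc,
    ← Real.rpow_one_add' hc.le (by simpa using hb.ne'), add_sub_cancel]

theorem SR_stationary_density_beta_model
    (δ : ℝ) (hδ : 0 < δ)
    (q : ℝ → ℝ) (hq : ∀ x, q x = δ * x ^ (δ - 1) * (1 + x) ^ (-1 - δ)) :
    (∫ x in Set.Ioi (0 : ℝ), q x = 1) ∧
    ∀ x : ℝ, 0 < x →
      q x = (x ^ (δ - 1) / betaFun (δ + 1) δ)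
        * ∫ y in Set.Ioi (0 : ℝ), (1 + y) ^ (δ + 1) * (1 + x + y) ^ (-1 - 2 * δ) * q y := by
  obtain rfl : q = fun x => δ * (x ^ (δ - 1) * (1 + x) ^ (-(δ + 1))) := by
    ext x; rw [hq, mul_assoc, neg_add', neg_sub_comm]
  refine ⟨?_, fun x hx => ?_⟩
  · rw [integral_const_mul, integral_Ioi_rpow_mul_one_add_rpow hδ one_pos,
      betaFun_one_right hδ, mul_inv_cancel₀ hδ.ne']
  have hintegrand : ∀ y ∈ Ioi (0 : ℝ),
      (1 + y) ^ (δ + 1) * (1 + x + y) ^ (-1 - 2 * δ) * (δ * (y ^ (δ - 1) * (1 + y) ^ (-(δ + 1))))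
        = δ * (y ^ (δ - 1) * ((1 + x) + y) ^ (-(δ + (δ + 1)))) := by
    intro y (hy : 0 < y)
    rw [Real.rpow_neg (by positivity) (δ + 1), show -1 - 2 * δ = -(δ + (δ + 1)) by ring]
    field_simp
  rw [setIntegral_congr_fun measurableSet_Ioi hintegrand, integral_const_mul,
    integral_Ioi_rpow_mul_add_rpow hδ (by linarith) (by linarith), betaFun_comm δ]
  field_simp [(betaFun_pos (by linarith : 0 < δ + 1) hδ).ne']
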